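/- arXiv:1809.00109 — 2 statements merged into one kernel-verified Lean document; each statement's English description precedes it below -/
import Mathlib

section
/- Suppose two agents have desired (homogeneous-transformation) positions p_HT and q_HT with ‖p_HT − q_HT‖ ≥ λ1·d_s, and their actual positions p, q satisfy ‖p − p_HT‖ ≤ δ and ‖q − q_HT‖ ≤ δ. If λ1 ≥ (δ + ε)/(δ_max + ε) where δ_max = (d_s − 2ε)/2, then ‖p − q‖ ≥ 2ε; i.e., the two agents, each enclosed in a ball of radius ε, do not collide. -/
/-! By the triangle inequality, tracking errors of at most `δ` shrink the separation of the
desired positions by at most `2δ`, so the agents are `2ε` apart once the desired positions are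
`2(δ + ε)` apart. Since `δmax + ε = ds / 2`, the condition on `λ1` says exactly
`λ1 ds ≥ 2(δ + ε)`. -/

/-- Euclidean norm on the plane. -/
noncomputable def norm2 (v : Fin 2 → ℝ) : ℝ := Real.sqrt (v 0 ^ 2 + v 1 ^ 2)

lemma norm2_sub_eq_dist (v w : Fin 2 → ℝ) :
    norm2 (v - w) = dist (WithLp.toLp 2 v : EuclideanSpace ℝ (Fin 2)) (WithLp.toLp 2 w) := by
  rw [EuclideanSpace.dist_eq, Fin.sum_univ_two]
  simp [norm2, Real.dist_eq, sq_abs]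

lemma sub_two_mul_le_dist_of_dist_le {X : Type*} [PseudoMetricSpace X] {p q a b : X} {D δ : ℝ}
    (hab : D ≤ dist a b) (hpa : dist p a ≤ δ) (hqb : dist q b ≤ δ) :
    D - 2 * δ ≤ dist p q := by
  have := dist_triangle4 a p q b
  rw [dist_comm a p] at this
  linarith

lemma two_mul_add_le_mul_of_div_le {ds ε δ δmax lam1 : ℝ} (hds : 0 < ds)
    (hδmax : δmax = (ds - 2 * ε) / 2) (hcond : lam1 ≥ (δ + ε) / (δmax + ε)) :
    2 * (δ + ε) ≤ lam1 * ds := by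
  have hhalf : δmax + ε = ds / 2 := by rw [hδmax]; ring
  rw [hhalf, ge_iff_le, div_le_iff₀ (half_pos hds)] at hcond
  linarith

theorem stmt6_general (p q pHT qHT : Fin 2 → ℝ)
    (ds ε δ δmax lam1 : ℝ)
    (hε : 0 < ε) (hds : 2 * ε < ds)
    (hδmax : δmax = (ds - 2 * ε) / 2)
    (hsep : norm2 (pHT - qHT) ≥ lam1 * ds)
    (htrp : norm2 (p - pHT) ≤ δ) (htrq : norm2 (q - qHT) ≤ δ)
    (hcond : lam1 ≥ (δ + ε) / (δmax + ε)) :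
    norm2 (p - q) ≥ 2 * ε := by
  rw [norm2_sub_eq_dist] at hsep htrp htrq ⊢
  have hgap := sub_two_mul_le_dist_of_dist_le hsep htrp htrq
  have hlam := two_mul_add_le_mul_of_div_le (by linarith) hδmax hcond
  linarith

/-- deviation-bounded agents tracking a continuum deformation whose minimum
eigenvalue satisfies λ1 ≥ (δ+ε)/(δmax+ε), with δmax = (d_s − 2ε)/2, do not collide. -/
theorem stmt6 (p q pHT qHT : Fin 2 → ℝ)
    (ds ε δ δmax lam1 : ℝ)
    (hε : 0 < ε) (hds : 2 * ε < ds) (hδ : 0 ≤ δ) (hlam : 0 < lam1)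
    (hδmax : δmax = (ds - 2 * ε) / 2)
    (hsep : norm2 (pHT - qHT) ≥ lam1 * ds)
    (htrp : norm2 (p - pHT) ≤ δ) (htrq : norm2 (q - qHT) ≤ δ)
    (hcond : lam1 ≥ (δ + ε) / (δmax + ε)) :
    norm2 (p - q) ≥ 2 * ε :=
  stmt6_general p q pHT qHT ds ε δ δmax lam1 hε hds hδmax hsep htrp htrq hcond
end

section
/- Let T be a closed triangle in ℝ² with vertices P1, P2, P3 and let p ∈ T be at distance ≥ d_b from each edge of T. Let f(x) = R U x + D with R orthogonal and U symmetric positive definite with smallest eigenvalue λ1. Then f(p) is at distance ≥ λ1·d_b from each edge of the image triangle f(T). -/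
/-!
The map `f x = R U x + D` is affine with linear part `R U`. The orthogonal `R` preserves norms,
and expanding `v` in an orthonormal eigenbasis of `U` gives `‖U v‖ ≥ λ₁ ‖v‖`, so `f` stretches
every distance by a factor at least `λ₁`. Since an affine map sends the edge `[a, c]` onto the
edge `[f a, f c]`, every point of an image edge is `f y` for some `y` on the original edge, and
`dist (f p) (f y) ≥ λ₁ dist p y ≥ λ₁ d_b`.
-/

open Matrix Metric

theorem Matrix.norm_toEuclideanLin_of_mem_unitaryGroup {𝕜 n : Type*} [RCLike 𝕜] [Fintype n]
    [DecidableEq n] {A : Matrix n n 𝕜} (hA : A ∈ unitaryGroup n 𝕜) (v : EuclideanSpace 𝕜 n) :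
    ‖toEuclideanLin A v‖ = ‖v‖ :=
  (toEuclideanCLM (n := n) (𝕜 := 𝕜) A).norm_map_of_mem_unitary
    (Unitary.map_mem toEuclideanCLM hA) v

theorem Matrix.IsHermitian.mul_norm_le_norm_toEuclideanLin {𝕜 n : Type*} [RCLike 𝕜] [Fintype n]
    [DecidableEq n] {A : Matrix n n 𝕜} (hA : A.IsHermitian) {c : ℝ} (hc : 0 ≤ c)
    (hcA : ∀ i, c ≤ hA.eigenvalues i) (v : EuclideanSpace 𝕜 n) :
    c * ‖v‖ ≤ ‖toEuclideanLin A v‖ := by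
  set b := hA.eigenvectorBasis
  have hsymm : (toEuclideanLin A).IsSymmetric := isSymmetric_toEuclideanLin_iff.mpr hA
  have hrepr : ∀ i, b.repr (toEuclideanLin A v) i = hA.eigenvalues i * b.repr v i := by
    intro i
    have hb : toEuclideanLin A (b i) = (hA.eigenvalues i : 𝕜) • b i := by
      ext j; simpa [toLpLin_apply] using congrFun (hA.mulVec_eigenvectorBasis i) j
    rw [b.repr_apply_apply, b.repr_apply_apply, ← hsymm, hb, inner_smul_left, RCLike.conj_ofReal]
  have hnorm : ∀ w, ‖w‖ ^ 2 = ∑ i, ‖b.repr w i‖ ^ 2 := fun w => by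
    rw [← b.repr.norm_map w, EuclideanSpace.norm_sq_eq]
  have hsq : (c * ‖v‖) ^ 2 ≤ ‖toEuclideanLin A v‖ ^ 2 := by
    rw [mul_pow, hnorm, hnorm, Finset.mul_sum]
    refine Finset.sum_le_sum fun i _ => ?_
    rw [hrepr, norm_mul, mul_pow, RCLike.norm_ofReal]
    gcongr
    exact (hcA i).trans (le_abs_self _)
  exact (pow_le_pow_iff_left₀ (by positivity) (norm_nonneg _) two_ne_zero).mp hsq

theorem Metric.mul_infDist_le_infDist_image {α β : Type*} [PseudoMetricSpace α]
    [PseudoMetricSpace β] {f : α → β} {K : ℝ} (hK : 0 ≤ K)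
    (hf : ∀ x y, K * dist x y ≤ dist (f x) (f y)) (x : α) (s : Set α) :
    K * infDist x s ≤ infDist (f x) (f '' s) := by
  rcases s.eq_empty_or_nonempty with rfl | hs
  · simp
  rw [le_infDist (hs.image f)]
  rintro _ ⟨y, hy, rfl⟩
  exact (mul_le_mul_of_nonneg_left (infDist_le_dist_of_mem hy) hK).trans (hf x y)

theorem AffineMap.mul_infDist_segment_le {E F : Type*} [NormedAddCommGroup E] [NormedSpace ℝ E]
    [NormedAddCommGroup F] [NormedSpace ℝ F] (g : E →ᵃ[ℝ] F) {K : ℝ} (hK : 0 ≤ K)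
    (hg : ∀ v, K * ‖v‖ ≤ ‖g.linear v‖) (p a c : E) :
    K * infDist p (segment ℝ a c) ≤ infDist (g p) (segment ℝ (g a) (g c)) := by
  rw [← image_segment]
  refine mul_infDist_le_infDist_image hK (fun x y => ?_) p _
  rw [dist_eq_norm_vsub, dist_eq_norm_vsub, ← g.linearMap_vsub]
  exact hg _

theorem stmt8_general (P1 P2 P3 p : EuclideanSpace ℝ (Fin 2))
    (db : ℝ)
    (hd12 : infDist p (segment ℝ P1 P2) ≥ db)
    (hd23 : infDist p (segment ℝ P2 P3) ≥ db)
    (hd13 : infDist p (segment ℝ P1 P3) ≥ db)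
    (R U : Matrix (Fin 2) (Fin 2) ℝ)
    (hR : Rᵀ * R = 1) (hU : U.IsHermitian) (hUpos : U.PosDef)
    (lam1 lam2 : ℝ)
    (h1 : hU.eigenvalues 0 = lam1) (h2 : hU.eigenvalues 1 = lam2)
    (hle : lam1 ≤ lam2)
    (D : EuclideanSpace ℝ (Fin 2))
    (f : EuclideanSpace ℝ (Fin 2) → EuclideanSpace ℝ (Fin 2))
    (hf : ∀ x, f x = Matrix.toEuclideanLin (R * U) x + D) :
    infDist (f p) (segment ℝ (f P1) (f P2)) ≥ lam1 * db ∧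
    infDist (f p) (segment ℝ (f P2) (f P3)) ≥ lam1 * db ∧
    infDist (f p) (segment ℝ (f P1) (f P3)) ≥ lam1 * db := by
  have hlam1 : 0 ≤ lam1 := h1 ▸ (hUpos.eigenvalues_pos 0).le
  have hRU (v : EuclideanSpace ℝ (Fin 2)) : lam1 * ‖v‖ ≤ ‖toEuclideanLin (R * U) v‖ := by
    rw [toLpLin_mul_same, LinearMap.comp_apply,
      norm_toEuclideanLin_of_mem_unitaryGroup (mem_unitaryGroup_iff'.mpr hR)]
    exact hU.mul_norm_le_norm_toEuclideanLin hlam1 (Fin.forall_fin_two.mpr ⟨h1.ge, h2 ▸ hle⟩) v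
  let g : EuclideanSpace ℝ (Fin 2) →ᵃ[ℝ] EuclideanSpace ℝ (Fin 2) :=
    ⟨f, toEuclideanLin (R * U), fun x v => by simp only [hf, vadd_eq_add, map_add]; abel⟩
  have hclear (a c : EuclideanSpace ℝ (Fin 2)) (hd : infDist p (segment ℝ a c) ≥ db) :
      infDist (f p) (segment ℝ (f a) (f c)) ≥ lam1 * db :=
    (mul_le_mul_of_nonneg_left hd hlam1).trans (g.mul_infDist_segment_le hlam1 hRU p a c)
  exact ⟨hclear P1 P2 hd12, hclear P2 P3 hd23, hclear P1 P3 hd13⟩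

/-- a point of the leading triangle with clearance d_b from each edge keeps
clearance λ1 d_b from each edge of the image triangle under f(x) = R U x + D. -/
theorem stmt8 (P1 P2 P3 p : EuclideanSpace ℝ (Fin 2))
    (hind : LinearIndependent ℝ ![P2 - P1, P3 - P1])
    (hp : p ∈ convexHull ℝ ({P1, P2, P3} : Set (EuclideanSpace ℝ (Fin 2))))
    (db : ℝ)
    (hd12 : infDist p (segment ℝ P1 P2) ≥ db)
    (hd23 : infDist p (segment ℝ P2 P3) ≥ db)
    (hd13 : infDist p (segment ℝ P1 P3) ≥ db)
    (R U : Matrix (Fin 2) (Fin 2) ℝ)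
    (hR : Rᵀ * R = 1) (hU : U.IsHermitian) (hUpos : U.PosDef)
    (lam1 lam2 : ℝ)
    (h1 : hU.eigenvalues 0 = lam1) (h2 : hU.eigenvalues 1 = lam2)
    (hle : lam1 ≤ lam2)
    (D : EuclideanSpace ℝ (Fin 2))
    (f : EuclideanSpace ℝ (Fin 2) → EuclideanSpace ℝ (Fin 2))
    (hf : ∀ x, f x = Matrix.toEuclideanLin (R * U) x + D) :
    infDist (f p) (segment ℝ (f P1) (f P2)) ≥ lam1 * db ∧
    infDist (f p) (segment ℝ (f P2) (f P3)) ≥ lam1 * db ∧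
    infDist (f p) (segment ℝ (f P1) (f P3)) ≥ lam1 * db :=
  stmt8_general P1 P2 P3 p db hd12 hd23 hd13 R U hR hU hUpos lam1 lam2 h1 h2 hle D f hf
end
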